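/- Let k = ℤ/(2) and A = k[X, Y]/(XY(X+Y)). Then A is a weakly Arf ring but A is not strictly closed; that is, the weakly Arf closure A^a equals A while the strict closure A* of A in its integral closure strictly contains A. -/

import Mathlib

open scoped TensorProduct

set_option synthInstance.maxHeartbeats 1000000
set_option maxHeartbeats 2000000

/-- The strict closure of `R` in `S`. -/
def strictClosure (R : Type*) [CommRing R] (S : Type*) [CommRing S] [Algebra R S] : Set S :=
  {α : S | α ⊗ₜ[R] (1 : S) = (1 : S) ⊗ₜ[R] α}

/-- A commutative ring `B` is weakly Arf if whenever `x` is a non-zerodivisor and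
`y/x, z/x` (in the total quotient ring `Q(B)`) are integral over `B`, then `yz/x ∈ B`. -/
def IsWeaklyArf (B : Type*) [CommRing B] : Prop :=
  ∀ (x : nonZeroDivisors B) (y z : B),
    IsIntegral B (IsLocalization.mk' (Localization (nonZeroDivisors B)) y x) →
    IsIntegral B (IsLocalization.mk' (Localization (nonZeroDivisors B)) z x) →
    ∃ b : B, algebraMap B (Localization (nonZeroDivisors B)) b =
      IsLocalization.mk' (Localization (nonZeroDivisors B)) (y * z) x

/-- The ideal `(XY(X+Y))` of `k[X, Y]`, `k = ℤ/(2)`. -/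
noncomputable def Iline : Ideal (MvPolynomial (Fin 2) (ZMod 2)) :=
  Ideal.span {MvPolynomial.X 0 * MvPolynomial.X 1 * (MvPolynomial.X 0 + MvPolynomial.X 1)}

/-- `A = k[X, Y]/(XY(X+Y))` with `k = ℤ/(2)`. -/
def Aline : Type := MvPolynomial (Fin 2) (ZMod 2) ⧸ Iline

noncomputable instance : CommRing Aline :=
  inferInstanceAs (CommRing (MvPolynomial (Fin 2) (ZMod 2) ⧸ Iline))

/-- The image `x` of `X` in `A`. -/
noncomputable def xA : Aline := Ideal.Quotient.mk Iline (MvPolynomial.X 0)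

/-- The image `y` of `Y` in `A`. -/
noncomputable def yA : Aline := Ideal.Quotient.mk Iline (MvPolynomial.X 1)

/-- `Ā = A/xA × A/yA × A/(x+y)A`, the integral closure of `A` in `Q(A)`. -/
noncomputable abbrev Abar : Type :=
  (Aline ⧸ Ideal.span {xA}) × (Aline ⧸ Ideal.span {yA}) × (Aline ⧸ Ideal.span {xA + yA})

/-- The canonical map `A → Ā`. -/
noncomputable def AtoAbar : Aline →+* Abar :=
  (Ideal.Quotient.mk (Ideal.span {xA})).prod
    ((Ideal.Quotient.mk (Ideal.span {yA})).prod (Ideal.Quotient.mk (Ideal.span {xA + yA})))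

/-!
Parametrising the three lines by `t ↦ (0, t), (t, 0), (t, t)` embeds `A` into `𝔽₂[t]³`, with
image the triples that have a common constant term and linear coefficients summing to zero.

If `y/x` and `z/x` are integral over `A`, then on each branch `x ∣ y` and `x ∣ z`, because
`𝔽₂[t]` is integrally closed; so `yz/x` is branchwise `x u v`, and a computation modulo `t²`
shows that this triple lies in the image again.

In `Ā`, with `e₁ = (1, 0, 0)` and `e₂ = (0, 1, 0)`, one has `x e₁ = 0` and
`x + y = y e₁ + x e₂`, which forces `y e₁ ⊗ 1 = y e₁ ⊗ e₁ = 1 ⊗ y e₁` in `Ā ⊗_A Ā`. But `y e₁`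
does not come from `A`: its branches `(t, 0, 0)` have linear coefficients summing to `1`.
-/

open Polynomial

theorem dvd_of_isIntegral_mk' {A D : Type*} [CommRing A] [CommRing D] [IsDomain D]
    [IsIntegrallyClosed D] {M : Submonoid A} (hM : M ≤ nonZeroDivisors A) {S : Type*}
    [CommRing S] [Algebra A S] [IsLocalization M S] (φ : A →+* D) {x : M} {y : A}
    (hx : φ x ≠ 0) (h : IsIntegral A (IsLocalization.mk' S y x)) : φ x ∣ φ y := by
  obtain ⟨p, hp, hp0⟩ := h
  have hA : aeval y (p.scaleRoots x) = 0 := by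
    apply IsLocalization.injective S hM
    rw [map_zero, ← aeval_algebraMap_apply]
    exact scaleRoots_aeval_eq_zero_of_aeval_mk'_eq_zero hp0
  let K := FractionRing D
  let f := (algebraMap D K).comp φ
  set r := algebraMap D K (φ y) / algebraMap D K (φ x)
  have hxK : f x ≠ 0 := (map_ne_zero_iff _ (IsFractionRing.injective D K)).2 hx
  have hfr : f x * r = f y := mul_div_cancel₀ _ hxK
  have hroot : aeval r (p.map φ) = 0 := by
    have := scaleRoots_eval₂_mul (p := p) f r x
    rw [hfr, eval₂_hom, ← coe_aeval_eq_eval, hA, map_zero, eq_comm] at this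
    rw [aeval_def, eval₂_map]
    exact (mul_eq_zero.1 this).resolve_left (pow_ne_zero _ hxK)
  obtain ⟨u, hu⟩ := IsIntegrallyClosed.isIntegral_iff.1 ⟨p.map φ, hp.map φ, hroot⟩
  exact ⟨u, IsFractionRing.injective D K (by rw [map_mul, hu]; exact hfr.symm)⟩

theorem isWeaklyArf_of_injective_pi {A ι : Type*} [CommRing A] {D : ι → Type*}
    [∀ i, CommRing (D i)] [∀ i, IsDomain (D i)] [∀ i, IsIntegrallyClosed (D i)]
    (f : A →+* Π i, D i) (hf : Function.Injective f)
    (hnzd : ∀ x ∈ nonZeroDivisors A, ∀ i, f x i ≠ 0)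
    (hmul : ∀ x u v : Π i, D i, x ∈ Set.range f → x * u ∈ Set.range f →
      x * v ∈ Set.range f → x * u * v ∈ Set.range f) :
    IsWeaklyArf A := by
  intro x y z hy hz
  have hdvd : ∀ {w : A}, IsIntegral A (IsLocalization.mk' (Localization (nonZeroDivisors A)) w x) →
      ∀ i, f x i ∣ f w i := fun h i =>
    dvd_of_isIntegral_mk' le_rfl ((Pi.evalRingHom D i).comp f) (hnzd x x.2 i) h
  choose u hu using hdvd hy
  choose v hv using hdvd hz
  have hyu : f y = f x * u := funext hu
  have hzv : f z = f x * v := funext hv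
  obtain ⟨b, hb⟩ := hmul (f x) u v ⟨x, rfl⟩ ⟨y, hyu⟩ ⟨z, hzv⟩
  refine ⟨b, ?_⟩
  rw [IsLocalization.eq_mk'_iff_mul_eq, ← map_mul]
  congr 1
  apply hf
  rw [map_mul, map_mul, hb, hyu, hzv]
  ring

section StrictClosure

variable {R S : Type*} [CommRing R] [CommRing S] [Algebra R S]

open TensorProduct

theorem algebraMap_mem_strictClosure (r : R) : algebraMap R S r ∈ strictClosure R S := by
  change _ ⊗ₜ _ = _ ⊗ₜ _
  rw [Algebra.algebraMap_eq_smul_one, smul_tmul]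

theorem smul_mem_strictClosure {a b : R} {e f : S} (hae : a • e = 0)
    (hrel : algebraMap R S (a + b) = b • e + a • f) : b • e ∈ strictClosure R S := by
  have key : (b • e) ⊗ₜ[R] (1 : S) = (b • e) ⊗ₜ[R] e := calc
    (b • e) ⊗ₜ[R] (1 : S) = e ⊗ₜ[R] (b • e + a • f - a • (1 : S)) := by
      rw [← hrel, map_add, ← Algebra.algebraMap_eq_smul_one, add_sub_cancel_left,
        Algebra.algebraMap_eq_smul_one, smul_tmul]
    _ = (b • e) ⊗ₜ[R] e + (a • e) ⊗ₜ[R] f - (a • e) ⊗ₜ[R] (1 : S) := by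
      rw [tmul_sub, tmul_add, ← smul_tmul, ← smul_tmul, ← smul_tmul]
    _ = (b • e) ⊗ₜ[R] e := by rw [hae, zero_tmul, zero_tmul, add_zero, sub_zero]
  have key' := congrArg (TensorProduct.comm R S S) key
  rw [comm_tmul, comm_tmul] at key'
  change _ ⊗ₜ _ = _ ⊗ₜ _
  rw [key, key', smul_tmul]

end StrictClosure

theorem MvPolynomial.algHom_sub_mem_of_X_sub_mem {σ R S : Type*} [CommSemiring R] [CommRing S]
    [Algebra R S] (I : Ideal S) (φ ψ : MvPolynomial σ R →ₐ[R] S)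
    (h : ∀ i, φ (X i) - ψ (X i) ∈ I) (f : MvPolynomial σ R) : φ f - ψ f ∈ I := by
  rw [← Ideal.Quotient.eq]
  have : (Ideal.Quotient.mkₐ R I).comp φ = (Ideal.Quotient.mkₐ R I).comp ψ :=
    MvPolynomial.algHom_ext fun i => Ideal.Quotient.eq.2 (h i)
  exact DFunLike.congr_fun this f

namespace ThreeLines

noncomputable def lineForm : Fin 3 → MvPolynomial (Fin 2) (ZMod 2) :=
  ![MvPolynomial.X 0, MvPolynomial.X 1, MvPolynomial.X 0 + MvPolynomial.X 1]

noncomputable def lineParam : Fin 3 → Fin 2 → (ZMod 2)[X] := ![![0, X], ![X, 0], ![X, X]]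

noncomputable def lineEval (i : Fin 3) : MvPolynomial (Fin 2) (ZMod 2) →ₐ[ZMod 2] (ZMod 2)[X] :=
  MvPolynomial.aeval (lineParam i)

theorem lineEval_lineForm_self (i : Fin 3) : lineEval i (lineForm i) = 0 := by
  fin_cases i <;> simp [lineEval, lineForm, lineParam, CharTwo.add_self_eq_zero]

theorem lineEval_lineForm_of_ne {i j : Fin 3} (h : i ≠ j) : lineEval i (lineForm j) = X := by
  fin_cases i <;> fin_cases j <;> simp_all [lineEval, lineForm, lineParam]

theorem lineForm_dvd_of_lineEval_eq_zero {i : Fin 3} {f : MvPolynomial (Fin 2) (ZMod 2)}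
    (hf : lineEval i f = 0) : lineForm i ∣ f := by
  let s : (ZMod 2)[X] →ₐ[ZMod 2] MvPolynomial (Fin 2) (ZMod 2) :=
    aeval (![MvPolynomial.X 1, MvPolynomial.X 0, MvPolynomial.X 0] i)
  have := MvPolynomial.algHom_sub_mem_of_X_sub_mem (Ideal.span {lineForm i}) (AlgHom.id _ _)
    (s.comp (lineEval i)) (fun j => ?_) f
  · simpa [hf, Ideal.mem_span_singleton] using this
  · fin_cases i <;> fin_cases j <;>
      simp [s, lineEval, lineForm, lineParam, CharTwo.sub_eq_add, add_comm]

theorem Iline_eq_span_prod_lineForm : Iline = Ideal.span {∏ i, lineForm i} := by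
  rw [Fin.prod_univ_three]
  rfl

noncomputable def branch (i : Fin 3) : Aline →+* (ZMod 2)[X] :=
  Ideal.Quotient.lift Iline (lineEval i) fun f hf => by
    obtain ⟨g, rfl⟩ := Ideal.mem_span_singleton'.1 (Iline_eq_span_prod_lineForm ▸ hf)
    rw [map_mul, map_prod, Finset.prod_eq_zero (Finset.mem_univ i) (lineEval_lineForm_self i),
      mul_zero]

theorem branch_mk (i : Fin 3) (f : MvPolynomial (Fin 2) (ZMod 2)) :
    branch i (Ideal.Quotient.mk Iline f) = lineEval i f := rfl

theorem eq_zero_of_forall_branch_eq_zero {a : Aline} (h : ∀ i, branch i a = 0) : a = 0 := by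
  obtain ⟨f, rfl⟩ := Ideal.Quotient.mk_surjective (I := Iline) a
  have hf : ∀ i, lineEval i f = 0 := h
  obtain ⟨g, rfl⟩ := lineForm_dvd_of_lineEval_eq_zero (hf 0)
  have hg : lineEval 1 g = 0 := by
    simpa [lineEval_lineForm_of_ne, X_ne_zero] using hf 1
  obtain ⟨g', rfl⟩ := lineForm_dvd_of_lineEval_eq_zero hg
  have hg' : lineEval 2 g' = 0 := by
    simpa [lineEval_lineForm_of_ne, X_ne_zero] using hf 2
  obtain ⟨g'', rfl⟩ := lineForm_dvd_of_lineEval_eq_zero hg'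
  refine Ideal.Quotient.eq_zero_iff_mem.2 (Iline_eq_span_prod_lineForm ▸ ?_)
  exact Ideal.mem_span_singleton.2 ⟨g'', by rw [Fin.prod_univ_three]; ring⟩

noncomputable def branches : Aline →+* (Fin 3 → (ZMod 2)[X]) := RingHom.pi branch

theorem branches_injective : Function.Injective branches :=
  (injective_iff_map_eq_zero _).2 fun _ h => eq_zero_of_forall_branch_eq_zero (congrFun h)

theorem branch_ne_zero {x : Aline} (hx : x ∈ nonZeroDivisors Aline) (i : Fin 3) :
    branch i x ≠ 0 := by
  intro h
  let w : Aline := Ideal.Quotient.mk Iline (∏ j ∈ Finset.univ.erase i, lineForm j)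
  have hxw : x * w = 0 := eq_zero_of_forall_branch_eq_zero fun j => by
    rcases eq_or_ne j i with rfl | hj
    · rw [map_mul, h, zero_mul]
    · rw [map_mul, branch_mk, map_prod,
        Finset.prod_eq_zero (Finset.mem_erase.2 ⟨hj, Finset.mem_univ j⟩)
          (lineEval_lineForm_self j), mul_zero]
  have hw : branch i w = X ^ 2 := by
    rw [branch_mk, map_prod, Finset.prod_congr rfl fun j hj =>
      lineEval_lineForm_of_ne (Finset.ne_of_mem_erase hj).symm, Finset.prod_const,
      Finset.card_erase_of_mem (Finset.mem_univ i), Finset.card_univ, Fintype.card_fin]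
  rw [(mul_left_mem_nonZeroDivisors_eq_zero_iff hx).1 hxw, map_zero] at hw
  exact pow_ne_zero 2 X_ne_zero hw.symm

theorem coeff_zero_lineEval (i : Fin 3) (f : MvPolynomial (Fin 2) (ZMod 2)) :
    (lineEval i f).coeff 0 = MvPolynomial.constantCoeff f := by
  have : (aeval (0 : ZMod 2)).comp (lineEval i) = MvPolynomial.aeval 0 :=
    MvPolynomial.algHom_ext fun j => by fin_cases i <;> fin_cases j <;> simp [lineEval, lineParam]
  rw [coeff_zero_eq_aeval_zero, ← AlgHom.comp_apply, this, MvPolynomial.aeval_zero]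
  rfl

theorem sum_coeff_one_lineEval (f : MvPolynomial (Fin 2) (ZMod 2)) :
    ∑ i, (lineEval i f).coeff 1 = 0 := by
  induction f using MvPolynomial.induction_on with
  | C c => simp
  | add p q hp hq => simp only [map_add, coeff_add, Finset.sum_add_distrib, hp, hq, add_zero]
  | mul_X p j _ =>
    simp only [Fin.sum_univ_three, map_mul, mul_coeff_one, coeff_zero_lineEval]
    fin_cases j <;> simp [lineEval, lineParam, CharTwo.add_self_eq_zero]

def IsBranchTriple (p : Fin 3 → (ZMod 2)[X]) : Prop :=
  (∀ i, (p i).coeff 0 = (p 0).coeff 0) ∧ ∑ i, (p i).coeff 1 = 0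

theorem isBranchTriple_branches (a : Aline) : IsBranchTriple (branches a) := by
  obtain ⟨f, rfl⟩ := Ideal.Quotient.mk_surjective (I := Iline) a
  refine ⟨fun i => ?_, sum_coeff_one_lineEval f⟩
  change (lineEval i f).coeff 0 = (lineEval 0 f).coeff 0
  rw [coeff_zero_lineEval, coeff_zero_lineEval]

theorem exists_branches_eq {p : Fin 3 → (ZMod 2)[X]} (hp : IsBranchTriple p) :
    ∃ a, branches a = p := by
  obtain ⟨hp0, hp1⟩ := hp
  set c := (p 0).coeff 0
  obtain ⟨g, hg⟩ : X ^ 2 ∣ p 0 + p 1 + p 2 + C c := by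
    rw [X_pow_dvd_iff]
    intro d hd
    interval_cases d
    · simp only [coeff_add, coeff_C_zero, hp0]
      linear_combination (2 * c) * CharTwo.two_eq_zero (R := ZMod 2)
    · simpa [coeff_C, ← add_assoc, Fin.sum_univ_three] using hp1
  -- `F` restricts to `p 0` and `p 1` on the axes; the term `X₀ X₁ g` corrects it on `X₀ = X₁`.
  let F : MvPolynomial (Fin 2) (ZMod 2) := aeval (MvPolynomial.X 1) (p 0) +
    aeval (MvPolynomial.X 0) (p 1) + MvPolynomial.C c +
    MvPolynomial.X 0 * MvPolynomial.X 1 * aeval (MvPolynomial.X 0) g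
  refine ⟨Ideal.Quotient.mk Iline F, funext fun i => ?_⟩
  change lineEval i F = p i
  have hconst : ∀ j, aeval 0 (p j) = C c := fun j => by
    rw [← coeff_zero_eq_aeval_zero', hp0, algebraMap_eq]
  fin_cases i <;>
    simp only [F, lineEval, lineParam, Fin.zero_eta, Fin.mk_one, Fin.reduceFinMk, Fin.isValue,
      Matrix.cons_val, Matrix.cons_val_zero, Matrix.cons_val_one, Matrix.cons_val_fin_one,
      map_add, map_mul, ← aeval_algHom_apply, MvPolynomial.aeval_X, aeval_X_left, AlgHom.coe_id,
      id_eq, hconst, MvPolynomial.algHom_C, algebraMap_eq, zero_mul, mul_zero, add_zero]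
  · linear_combination C c * CharTwo.two_eq_zero (R := (ZMod 2)[X])
  · linear_combination C c * CharTwo.two_eq_zero (R := (ZMod 2)[X])
  · linear_combination hg + (X * X * g - p 2) * CharTwo.two_eq_zero (R := (ZMod 2)[X])

theorem IsBranchTriple.mul {p q : Fin 3 → (ZMod 2)[X]} (hp : IsBranchTriple p)
    (hq : IsBranchTriple q) : IsBranchTriple (p * q) := by
  obtain ⟨a, rfl⟩ := exists_branches_eq hp
  obtain ⟨b, rfl⟩ := exists_branches_eq hq
  rw [← map_mul]
  exact isBranchTriple_branches (a * b)

-- Over `𝔽₂`, `∑ i, a i = 0` means that `a` has zero or two nonzero entries.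
theorem sum_mul_mul_eq_zero_of_zmodTwo : ∀ a μ ν : Fin 3 → ZMod 2, ∑ i, a i = 0 →
    ∑ i, a i * μ i = 0 → ∑ i, a i * ν i = 0 → ∑ i, a i * μ i * ν i = 0 := by
  decide

theorem IsBranchTriple.mul_mul {x u v : Fin 3 → (ZMod 2)[X]} (hx : IsBranchTriple x)
    (hu : IsBranchTriple (x * u)) (hv : IsBranchTriple (x * v)) :
    IsBranchTriple (x * u * v) := by
  obtain ⟨hx0, hx1⟩ := hx
  obtain h | h : (x 0).coeff 0 = 0 ∨ (x 0).coeff 0 = 1 := by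
    generalize (x 0).coeff 0 = c
    revert c
    decide
  · refine ⟨fun i => by simp [mul_coeff_zero, hx0 i, h], ?_⟩
    have := sum_mul_mul_eq_zero_of_zmodTwo (fun i => (x i).coeff 1) (fun i => (u i).coeff 0)
      (fun i => (v i).coeff 0) hx1 (by simpa [mul_coeff_one, hx0, h] using hu.2)
      (by simpa [mul_coeff_one, hx0, h] using hv.2)
    simpa [mul_coeff_one, mul_coeff_zero, hx0, h, mul_assoc] using this
  · -- `x` is a unit modulo `t²` on every branch, so `v` is itself a branch triple.
    have hv0 : ∀ i, (v i).coeff 0 = (v 0).coeff 0 := fun i => by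
      simpa [mul_coeff_zero, hx0 i, h] using hv.1 i
    have hv1 : ∑ i, (v i).coeff 1 = 0 := by
      have := hv.2
      simp only [Pi.mul_apply, mul_coeff_one, hx0, h, hv0, Fin.sum_univ_three] at this hx1 ⊢
      linear_combination this - (v 0).coeff 0 * hx1
    exact hu.mul ⟨hv0, hv1⟩

theorem range_branches : Set.range branches = {p | IsBranchTriple p} :=
  Set.ext fun _ => ⟨fun ⟨a, ha⟩ => ha ▸ isBranchTriple_branches a, exists_branches_eq⟩

noncomputable def lineA (i : Fin 3) : Aline := Ideal.Quotient.mk Iline (lineForm i)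

theorem branch_eq_zero_of_mem_span {i : Fin 3} {a : Aline} (h : a ∈ Ideal.span {lineA i}) :
    branch i a = 0 := by
  obtain ⟨c, rfl⟩ := Ideal.mem_span_singleton'.1 h
  rw [map_mul, lineA, branch_mk, lineEval_lineForm_self, mul_zero]

noncomputable def e₁ : Abar := (1, 0, 0)

noncomputable def e₂ : Abar := (0, 1, 0)

theorem AtoAbar_xA_mul_e₁ : AtoAbar xA * e₁ = 0 := by
  simp [AtoAbar, e₁]

theorem AtoAbar_xA_add_yA : AtoAbar (xA + yA) = AtoAbar yA * e₁ + AtoAbar xA * e₂ := by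
  simp [AtoAbar, e₁, e₂]

theorem AtoAbar_ne_yA_mul_e₁ (a : Aline) : AtoAbar a ≠ AtoAbar yA * e₁ := by
  intro h
  have h₀ : a - yA ∈ Ideal.span {xA} :=
    Ideal.Quotient.eq.1 (by simpa [AtoAbar, e₁] using congrArg Prod.fst h)
  have h₁ : a ∈ Ideal.span {yA} :=
    Ideal.Quotient.eq_zero_iff_mem.1 (by simpa [AtoAbar, e₁] using congrArg (·.2.1) h)
  have h₂ : a ∈ Ideal.span {xA + yA} :=
    Ideal.Quotient.eq_zero_iff_mem.1 (by simpa [AtoAbar, e₁] using congrArg (·.2.2) h)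
  have hb₀ : branch 0 a = X := by
    rw [sub_eq_zero.1 ((map_sub (branch 0) a yA).symm.trans
      (branch_eq_zero_of_mem_span (i := 0) h₀))]
    exact lineEval_lineForm_of_ne (i := 0) (j := 1) (by decide)
  have := (isBranchTriple_branches a).2
  rw [Fin.sum_univ_three] at this
  change (branch 0 a).coeff 1 + (branch 1 a).coeff 1 + (branch 2 a).coeff 1 = 0 at this
  rw [hb₀, branch_eq_zero_of_mem_span (i := 1) h₁, branch_eq_zero_of_mem_span (i := 2) h₂] at this
  simp at this

theorem isWeaklyArf_Aline : IsWeaklyArf Aline := by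
  refine isWeaklyArf_of_injective_pi branches branches_injective
    (fun x hx i => branch_ne_zero hx i) fun x u v => ?_
  rw [range_branches]
  exact IsBranchTriple.mul_mul

end ThreeLines

/-- `A = (ℤ/(2))[X,Y]/(XY(X+Y))` is a weakly Arf ring (so its weakly Arf closure is `A`
itself), but `A` is not strictly closed: the strict closure of `A` in its integral closure
`Ā` strictly contains `A`. -/
theorem weaklyArf_but_not_strictlyClosed_three_lines :
    letI : Algebra Aline Abar := AtoAbar.toAlgebra
    IsWeaklyArf Aline ∧
    Set.range (algebraMap Aline Abar) ⊂ strictClosure Aline Abar := by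
  let _ : Algebra Aline Abar := AtoAbar.toAlgebra
  refine ⟨ThreeLines.isWeaklyArf_Aline,
    (Set.ssubset_iff_of_subset ?_).2 ⟨yA • ThreeLines.e₁, ?_, ?_⟩⟩
  · rintro _ ⟨a, rfl⟩
    exact algebraMap_mem_strictClosure a
  · exact smul_mem_strictClosure ThreeLines.AtoAbar_xA_mul_e₁ ThreeLines.AtoAbar_xA_add_yA
  · rintro ⟨a, ha⟩
    exact ThreeLines.AtoAbar_ne_yA_mul_e₁ a ha
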